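/- arXiv:0711.1852 — 5 statements merged into one kernel-verified Lean document; each statement's English description precedes it below -/
import Mathlib

section
/- (Sturm comparison) Let q₀, q₁ be continuous on an interval with q₀(x) − q₁(x) > 0 for all x, and let u_j be nontrivial real solutions of −u_j'' + q_j u_j = 0 for j = 0,1. Then between any two consecutive zeros of u₀, there is a zero of u₁. -/
/-!
If `u₁` had no zero in `(a, b)`, pass to consecutive zeros `a' < b'` of `u₀` inside `[a, b]`;
they exist because, by uniqueness for the linear ODE `u'' = q₀ u`, a solution that vanishes on an
open interval vanishes everywhere. On `(a', b')` the product `u₀ u₁` has a constant sign, which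
we may take positive after replacing `u₁` by `-u₁`. The Wronskian `W = u₁ u₀' - u₁' u₀` then has
`W' = (q₀ - q₁) u₀ u₁ > 0`, so `W a' < W b'`. But `W a' = u₁ a' · u₀' a' ≥ 0` and
`W b' = u₁ b' · u₀' b' ≤ 0`, since `u₀ u₁ > 0` just to the right of `a'` and just to the left
of `b'`.
-/

open Set Filter Topology

theorem ContDiffAt.hasDerivAt_deriv {𝕜 F : Type*} [NontriviallyNormedField 𝕜]
    [NormedAddCommGroup F] [NormedSpace 𝕜 F] {f : 𝕜 → F} {x : 𝕜} (h : ContDiffAt 𝕜 2 f x) :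
    HasDerivAt (deriv f) (deriv (deriv f) x) x :=
  ((h.derivWithin (m := 1) (by norm_num)).differentiableAt one_ne_zero).hasDerivAt

theorem ContDiffAt.hasDerivAt_derivWithin {𝕜 F : Type*} [NontriviallyNormedField 𝕜]
    [NormedAddCommGroup F] [NormedSpace 𝕜 F] {f : 𝕜 → F} {s : Set 𝕜} {x : 𝕜}
    (h : ContDiffAt 𝕜 2 f x) (hs : s ∈ 𝓝 x) :
    HasDerivAt (derivWithin f s) (deriv (deriv f) x) x :=
  h.hasDerivAt_deriv.congr_of_eventuallyEq <|
    (eventually_mem_nhds_iff.2 hs).mono fun _ hy ↦ derivWithin_of_mem_nhds hy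

theorem IsPreconnected.pos_or_neg_of_ne_zero {α : Type*} [TopologicalSpace α] {s : Set α}
    {f : α → ℝ} (hs : IsPreconnected s) (hf : ContinuousOn f s) (hne : ∀ x ∈ s, f x ≠ 0) :
    (∀ x ∈ s, 0 < f x) ∨ ∀ x ∈ s, f x < 0 := by
  by_contra! h
  obtain ⟨⟨x, hx, hfx⟩, y, hy, hfy⟩ := h
  obtain ⟨z, hz, hfz⟩ := hs.intermediate_value hx hy hf ⟨hfx, hfy⟩
  exact hne z hz hfz

theorem ContinuousOn.exists_consecutive_zeros {f : ℝ → ℝ} {a b m : ℝ}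
    (hf : ContinuousOn f (Icc a b)) (ha : f a = 0) (hb : f b = 0) (hm : m ∈ Icc a b)
    (hfm : f m ≠ 0) :
    ∃ a' b', a ≤ a' ∧ a' < b' ∧ b' ≤ b ∧ f a' = 0 ∧ f b' = 0 ∧ ∀ x ∈ Ioo a' b', f x ≠ 0 := by
  have hzeros {c d : ℝ} (h : Icc c d ⊆ Icc a b) : IsCompact (Icc c d ∩ f ⁻¹' {0}) :=
    isCompact_Icc.of_isClosed_subset
      ((hf.mono h).preimage_isClosed_of_isClosed isClosed_Icc isClosed_singleton)
      inter_subset_left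
  obtain ⟨a', ⟨⟨haa', ha'm⟩, ha'0⟩, ha'max⟩ :=
    (hzeros (Icc_subset_Icc_right hm.2)).exists_isGreatest ⟨a, ⟨le_rfl, hm.1⟩, ha⟩
  obtain ⟨b', ⟨⟨hmb', hb'b⟩, hb'0⟩, hb'min⟩ :=
    (hzeros (Icc_subset_Icc_left hm.1)).exists_isLeast ⟨b, ⟨hm.2, le_rfl⟩, hb⟩
  have ha'm : a' < m := ha'm.lt_of_ne fun h ↦ hfm (h ▸ ha'0)
  have hmb' : m < b' := hmb'.lt_of_ne fun h ↦ hfm (h ▸ hb'0)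
  refine ⟨a', b', haa', ha'm.trans hmb', hb'b, ha'0, hb'0, fun x hx hx0 ↦ ?_⟩
  rcases le_total x m with hxm | hxm
  · exact hx.1.not_ge (ha'max ⟨⟨haa'.trans hx.1.le, hxm⟩, hx0⟩)
  · exact hx.2.not_ge (hb'min ⟨⟨hxm, hx.2.le.trans hb'b⟩, hx0⟩)

section LinearODE

variable {q u u' : ℝ → ℝ} {a b t₀ : ℝ}

theorem eqOn_zero_of_hasDerivAt_of_abs_le {K : ℝ} (hq : ∀ t ∈ Ioo a b, |q t| ≤ K)
    (hu : ∀ t ∈ Ioo a b, HasDerivAt u (u' t) t)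
    (hu' : ∀ t ∈ Ioo a b, HasDerivAt u' (q t * u t) t)
    (ht₀ : t₀ ∈ Ioo a b) (h0 : u t₀ = 0) (h0' : u' t₀ = 0) :
    EqOn u 0 (Ioo a b) := by
  have hlip (t : ℝ) (ht : t ∈ Ioo a b) :
      LipschitzOnWith (max 1 K.toNNReal) (fun p : ℝ × ℝ ↦ (p.2, q t * p.1)) univ := by
    refine (LipschitzWith.prod_snd.prodMk (((lipschitzWith_smul (q t)).comp
      LipschitzWith.prod_fst).weaken ?_)).lipschitzOnWith
    rw [mul_one, ← NNReal.coe_le_coe, coe_nnnorm, Real.norm_eq_abs]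
    exact (hq t ht).trans (Real.le_coe_toNNReal K)
  have hsol := ODE_solution_unique_of_mem_Ioo hlip ht₀ (f := fun t ↦ (u t, u' t)) (g := 0)
    (fun t ht ↦ ⟨(hu t ht).prodMk (hu' t ht), trivial⟩)
    (fun t _ ↦ ⟨(hasDerivAt_const t 0).congr_deriv (by ext <;> simp), trivial⟩)
    (by simp [h0, h0'])
  exact fun t ht ↦ congrArg Prod.fst (hsol ht)

theorem ContDiffOn.eqOn_zero_of_deriv_deriv_eq_mul (hq : ContinuousOn q (Icc a b))
    (hu : ContDiffOn ℝ 2 u (Icc a b)) (hode : ∀ t ∈ Ioo a b, deriv (deriv u) t = q t * u t)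
    (ht₀ : t₀ ∈ Ioo a b) (h0 : u t₀ = 0) (h0' : deriv u t₀ = 0) :
    EqOn u 0 (Icc a b) := by
  obtain ⟨K, hK⟩ := isCompact_Icc.exists_bound_of_continuousOn hq
  have hu2 (t : ℝ) (ht : t ∈ Ioo a b) : ContDiffAt ℝ 2 u t := hu.contDiffAt (Icc_mem_nhds ht.1 ht.2)
  have hzero : EqOn u 0 (Ioo a b) :=
    eqOn_zero_of_hasDerivAt_of_abs_le (fun t ht ↦ hK t (Ioo_subset_Icc_self ht))
      (fun t ht ↦ ((hu2 t ht).differentiableAt two_ne_zero).hasDerivAt)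
      (fun t ht ↦ hode t ht ▸ (hu2 t ht).hasDerivAt_deriv) ht₀ h0 h0'
  exact hzero.of_subset_closure hu.continuousOn continuousOn_const Ioo_subset_Icc_self
    (closure_Ioo (ht₀.1.trans ht₀.2).ne).ge

theorem exists_mem_Ioo_ne_zero_of_deriv_deriv_eq_mul {I : Set ℝ} (hI : I.OrdConnected)
    (hq : ContinuousOn q I) (hu : ContDiffOn ℝ 2 u I)
    (hode : ∀ t ∈ I, deriv (deriv u) t = q t * u t) (hnt : ¬ ∀ x ∈ I, u x = 0)
    (ha : a ∈ I) (hb : b ∈ I) (hab : a < b) : ∃ m ∈ Ioo a b, u m ≠ 0 := by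
  by_contra! hzero
  obtain ⟨x, hx, hx0⟩ : ∃ x ∈ I, u x ≠ 0 := by simpa using hnt
  have ht₀ : (a + b) / 2 ∈ Ioo a b := ⟨by linarith, by linarith⟩
  have hflat : u =ᶠ[𝓝 ((a + b) / 2)] 0 := eventually_of_mem (Ioo_mem_nhds ht₀.1 ht₀.2) hzero
  have hJ : Icc (min a x) (max b x) ⊆ I := hI.out (min_rec' (· ∈ I) ha hx) (max_rec' _ hb hx)
  exact hx0 <| (hu.mono hJ).eqOn_zero_of_deriv_deriv_eq_mul (hq.mono hJ)
    (fun t ht ↦ hode t (hJ (Ioo_subset_Icc_self ht)))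
    ⟨(min_le_left a x).trans_lt ht₀.1, ht₀.2.trans_le (le_max_left b x)⟩
    hflat.eq_of_nhds (by simpa using hflat.deriv_eq) ⟨min_le_right a x, le_max_right b x⟩

end LinearODE

theorem HasDerivWithinAt.mul_nonneg_of_nhdsGT {f g : ℝ → ℝ} {f' a : ℝ}
    (hf : HasDerivWithinAt f f' (Ioi a) a) (hg : ContinuousWithinAt g (Ioi a) a)
    (hfa : f a = 0) (hfg : ∀ᶠ x in 𝓝[>] a, 0 ≤ f x * g x) : 0 ≤ f' * g a := by
  refine ge_of_tendsto (((hasDerivWithinAt_iff_tendsto_slope' self_notMem_Ioi).1 hf).mul hg) ?_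
  filter_upwards [self_mem_nhdsWithin, hfg] with x (hx : a < x) hx0
  rw [slope_def_field, hfa, sub_zero, div_mul_eq_mul_div]
  exact div_nonneg hx0 (sub_pos.2 hx).le

theorem HasDerivWithinAt.mul_nonpos_of_nhdsLT {f g : ℝ → ℝ} {f' b : ℝ}
    (hf : HasDerivWithinAt f f' (Iio b) b) (hg : ContinuousWithinAt g (Iio b) b)
    (hfb : f b = 0) (hfg : ∀ᶠ x in 𝓝[<] b, 0 ≤ f x * g x) : f' * g b ≤ 0 := by
  refine le_of_tendsto (((hasDerivWithinAt_iff_tendsto_slope' self_notMem_Iio).1 hf).mul hg) ?_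
  filter_upwards [self_mem_nhdsWithin, hfg] with x (hx : x < b) hx0
  rw [slope_def_field, hfb, sub_zero, div_mul_eq_mul_div]
  exact div_nonpos_of_nonneg_of_nonpos hx0 (sub_neg.2 hx).le

def wronskian (f f' g g' : ℝ → ℝ) (x : ℝ) : ℝ := f x * g' x - f' x * g x

theorem hasDerivAt_wronskian {f f' g g' : ℝ → ℝ} {f'' g'' x : ℝ}
    (hf : HasDerivAt f (f' x) x) (hf' : HasDerivAt f' f'' x)
    (hg : HasDerivAt g (g' x) x) (hg' : HasDerivAt g' g'' x) :
    HasDerivAt (wronskian f f' g g') (f x * g'' - f'' * g x) x :=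
  ((hf.mul hg').sub (hf'.mul hg)).congr_deriv (by ring)

section Sturm

variable {q₀ q₁ u₀ u₁ : ℝ → ℝ} {a b : ℝ}

theorem strictMonoOn_wronskian {u₀' u₁' : ℝ → ℝ} (hq : ∀ x ∈ Ioo a b, q₁ x < q₀ x)
    (hu₀ : ∀ x ∈ Ioo a b, HasDerivAt u₀ (u₀' x) x) (hu₁ : ∀ x ∈ Ioo a b, HasDerivAt u₁ (u₁' x) x)
    (hW : ContinuousOn (wronskian u₁ u₁' u₀ u₀') (Icc a b))
    (hode₀ : ∀ x ∈ Ioo a b, HasDerivAt u₀' (q₀ x * u₀ x) x)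
    (hode₁ : ∀ x ∈ Ioo a b, HasDerivAt u₁' (q₁ x * u₁ x) x)
    (hpos : ∀ x ∈ Ioo a b, 0 < u₀ x * u₁ x) :
    StrictMonoOn (wronskian u₁ u₁' u₀ u₀') (Icc a b) := by
  refine strictMonoOn_of_hasDerivWithinAt_pos (convex_Icc a b) hW
    (f' := fun x ↦ (q₀ x - q₁ x) * (u₀ x * u₁ x)) ?_ ?_ <;> rw [interior_Icc]
  · exact fun x hx ↦ ((hasDerivAt_wronskian (hu₁ x hx) (hode₁ x hx) (hu₀ x hx)
      (hode₀ x hx)).congr_deriv (by ring)).hasDerivWithinAt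
  · exact fun x hx ↦ mul_pos (sub_pos.2 (hq x hx)) (hpos x hx)

theorem sturm_comparison_of_hasDerivWithinAt {u₀' u₁' : ℝ → ℝ} (hab : a < b)
    (hq : ∀ x ∈ Ioo a b, q₁ x < q₀ x)
    (hu₀ : ∀ x ∈ Icc a b, HasDerivWithinAt u₀ (u₀' x) (Icc a b) x)
    (hu₁ : ∀ x ∈ Icc a b, HasDerivWithinAt u₁ (u₁' x) (Icc a b) x)
    (hu₀' : ContinuousOn u₀' (Icc a b)) (hu₁' : ContinuousOn u₁' (Icc a b))
    (hode₀ : ∀ x ∈ Ioo a b, HasDerivAt u₀' (q₀ x * u₀ x) x)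
    (hode₁ : ∀ x ∈ Ioo a b, HasDerivAt u₁' (q₁ x * u₁ x) x)
    (hne : ∀ x ∈ Ioo a b, u₀ x ≠ 0) (hza : u₀ a = 0) (hzb : u₀ b = 0) :
    ∃ c ∈ Ioo a b, u₁ c = 0 := by
  by_contra! hne₁
  have hc₀ : ContinuousOn u₀ (Icc a b) := fun x hx ↦ (hu₀ x hx).continuousWithinAt
  have hc₁ : ContinuousOn u₁ (Icc a b) := fun x hx ↦ (hu₁ x hx).continuousWithinAt
  have hsign := isPreconnected_Ioo.pos_or_neg_of_ne_zero
    ((hc₀.mul hc₁).mono Ioo_subset_Icc_self) fun x hx ↦ mul_ne_zero (hne x hx) (hne₁ x hx)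
  wlog hpos : ∀ x ∈ Ioo a b, 0 < u₀ x * u₁ x generalizing u₁ u₁'
  · refine this (u₁ := -u₁) (u₁' := -u₁') (fun x hx ↦ (hu₁ x hx).neg) hu₁'.neg
      (fun x hx ↦ (hode₁ x hx).neg.congr_deriv (by simp)) (by simpa using hne₁) hc₁.neg
      (by simpa using hsign.symm) (by simpa using hsign.resolve_left hpos)
  have hW := strictMonoOn_wronskian hq
    (fun x hx ↦ (hu₀ x (Ioo_subset_Icc_self hx)).hasDerivAt (Icc_mem_nhds hx.1 hx.2))
    (fun x hx ↦ (hu₁ x (Ioo_subset_Icc_self hx)).hasDerivAt (Icc_mem_nhds hx.1 hx.2))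
    ((hc₁.mul hu₀').sub (hu₁'.mul hc₀)) hode₀ hode₁ hpos
  have ha : a ∈ Icc a b := left_mem_Icc.2 hab.le
  have hb : b ∈ Icc a b := right_mem_Icc.2 hab.le
  have hWa : 0 ≤ wronskian u₁ u₁' u₀ u₀' a := by
    have := ((hu₀ a ha).mono_of_mem_nhdsWithin (Icc_mem_nhdsGT hab)).mul_nonneg_of_nhdsGT
      ((hc₁ a ha).mono_of_mem_nhdsWithin (Icc_mem_nhdsGT hab)) hza
      (by filter_upwards [Ioo_mem_nhdsGT hab] with x hx using (hpos x hx).le)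
    simpa [wronskian, hza, mul_comm] using this
  have hWb : wronskian u₁ u₁' u₀ u₀' b ≤ 0 := by
    have := ((hu₀ b hb).mono_of_mem_nhdsWithin (Icc_mem_nhdsLT hab)).mul_nonpos_of_nhdsLT
      ((hc₁ b hb).mono_of_mem_nhdsWithin (Icc_mem_nhdsLT hab)) hzb
      (by filter_upwards [Ioo_mem_nhdsLT hab] with x hx using (hpos x hx).le)
    simpa [wronskian, hzb, mul_comm] using this
  exact (hW ha hb hab).not_ge (hWb.trans hWa)

theorem sturm_comparison_Icc (hab : a < b)
    (hq : ∀ x ∈ Ioo a b, q₁ x < q₀ x)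
    (hu₀ : ContDiffOn ℝ 2 u₀ (Icc a b)) (hu₁ : ContDiffOn ℝ 2 u₁ (Icc a b))
    (hode₀ : ∀ x ∈ Ioo a b, deriv (deriv u₀) x = q₀ x * u₀ x)
    (hode₁ : ∀ x ∈ Ioo a b, deriv (deriv u₁) x = q₁ x * u₁ x)
    (hne : ∀ x ∈ Ioo a b, u₀ x ≠ 0) (hza : u₀ a = 0) (hzb : u₀ b = 0) :
    ∃ c ∈ Ioo a b, u₁ c = 0 := by
  -- `derivWithin`, not `deriv`: `a` and `b` may be endpoints of the domain, where `deriv` is junk.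
  have hderiv {u : ℝ → ℝ} (hu : ContDiffOn ℝ 2 u (Icc a b)) (x : ℝ) (hx : x ∈ Icc a b) :
      HasDerivWithinAt u (derivWithin u (Icc a b) x) (Icc a b) x :=
    (hu.differentiableOn two_ne_zero x hx).hasDerivWithinAt
  have hcont {u : ℝ → ℝ} (hu : ContDiffOn ℝ 2 u (Icc a b)) :
      ContinuousOn (derivWithin u (Icc a b)) (Icc a b) :=
    hu.continuousOn_derivWithin (uniqueDiffOn_Icc hab) one_le_two
  have hderiv2 {q u : ℝ → ℝ} (hu : ContDiffOn ℝ 2 u (Icc a b))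
      (hode : ∀ x ∈ Ioo a b, deriv (deriv u) x = q x * u x) (x : ℝ) (hx : x ∈ Ioo a b) :
      HasDerivAt (derivWithin u (Icc a b)) (q x * u x) x :=
    hode x hx ▸ (hu.contDiffAt (Icc_mem_nhds hx.1 hx.2)).hasDerivAt_derivWithin
      (Icc_mem_nhds hx.1 hx.2)
  exact sturm_comparison_of_hasDerivWithinAt hab hq (hderiv hu₀) (hderiv hu₁) (hcont hu₀)
    (hcont hu₁) (hderiv2 hu₀ hode₀) (hderiv2 hu₁ hode₁) hne hza hzb

end Sturm

theorem sturm_comparison_general (I : Set ℝ) (hI : I.OrdConnected)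
    (q₀ q₁ u₀ u₁ : ℝ → ℝ)
    (hq₀ : ContinuousOn q₀ I)
    (hqlt : ∀ x ∈ I, q₁ x < q₀ x)
    (hu₀ : ContDiffOn ℝ 2 u₀ I) (hu₁ : ContDiffOn ℝ 2 u₁ I)
    (hode₀ : ∀ x ∈ I, deriv (deriv u₀) x = q₀ x * u₀ x)
    (hode₁ : ∀ x ∈ I, deriv (deriv u₁) x = q₁ x * u₁ x)
    (hnt₀ : ¬ ∀ x ∈ I, u₀ x = 0)
    (a b : ℝ) (ha : a ∈ I) (hb : b ∈ I) (hab : a < b)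
    (hza : u₀ a = 0) (hzb : u₀ b = 0) :
    ∃ c ∈ Ioo a b, u₁ c = 0 := by
  obtain ⟨m, hm, hm0⟩ :=
    exists_mem_Ioo_ne_zero_of_deriv_deriv_eq_mul hI hq₀ hu₀ hode₀ hnt₀ ha hb hab
  obtain ⟨a', b', haa', hab', hb'b, ha'0, hb'0, hne⟩ :=
    (hu₀.continuousOn.mono (hI.out ha hb)).exists_consecutive_zeros hza hzb
      (Ioo_subset_Icc_self hm) hm0
  have hJ : Icc a' b' ⊆ I := (Icc_subset_Icc haa' hb'b).trans (hI.out ha hb)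
  have hJ' : Ioo a' b' ⊆ I := Ioo_subset_Icc_self.trans hJ
  obtain ⟨c, hc, hc0⟩ := sturm_comparison_Icc hab' (fun x hx ↦ hqlt x (hJ' hx))
    (hu₀.mono hJ) (hu₁.mono hJ) (fun x hx ↦ hode₀ x (hJ' hx)) (fun x hx ↦ hode₁ x (hJ' hx))
    hne ha'0 hb'0
  exact ⟨c, Ioo_subset_Ioo haa' hb'b hc, hc0⟩

/-- Sturm's comparison theorem: if `q₀ > q₁` pointwise on an interval `I`, and
`u_j'' = q_j u_j` with `u_j` nontrivial, then between any two zeros of `u₀`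
there is a zero of `u₁`. -/
theorem sturm_comparison (I : Set ℝ) (hI : I.OrdConnected)
    (q₀ q₁ u₀ u₁ : ℝ → ℝ)
    (hq₀ : ContinuousOn q₀ I) (hq₁ : ContinuousOn q₁ I)
    (hqlt : ∀ x ∈ I, q₁ x < q₀ x)
    (hu₀ : ContDiffOn ℝ 2 u₀ I) (hu₁ : ContDiffOn ℝ 2 u₁ I)
    (hode₀ : ∀ x ∈ I, deriv (deriv u₀) x = q₀ x * u₀ x)
    (hode₁ : ∀ x ∈ I, deriv (deriv u₁) x = q₁ x * u₁ x)
    (hnt₀ : ¬ ∀ x ∈ I, u₀ x = 0) (hnt₁ : ¬ ∀ x ∈ I, u₁ x = 0)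
    (a b : ℝ) (ha : a ∈ I) (hb : b ∈ I) (hab : a < b)
    (hza : u₀ a = 0) (hzb : u₀ b = 0) :
    ∃ c ∈ Ioo a b, u₁ c = 0 :=
  sturm_comparison_general I hI q₀ q₁ u₀ u₁ hq₀ hqlt hu₀ hu₁ hode₀ hode₁ hnt₀ a b ha hb hab hza hzb
end

section
/- Suppose ρ : [a,∞) → (0,∞) is not integrable at ∞ and φ solves φ'(x) = ρ(x)(A sin²φ(x) + cos φ(x) sin φ(x) + B cos²φ(x)) with constants A, B such that 4AB < 1. Then every solution φ is bounded. -/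
/-!
A solution of `φ' = ρ Q(φ)` with `ρ > 0` can never cross a level `c` upwards where `Q c < 0`,
since its derivative is negative whenever it meets that level. Here
`Q θ = A sin²θ + cos θ sin θ + B cos²θ` is `π`-periodic, and `4AB < 1` makes the quadratic
`A t² + t + B` negative somewhere, so `Q (arctan t) < 0`; periodicity then provides such
levels above `φ a`. Applied to `-φ`, which solves the equation for `(-A, -B)`, this bounds
`φ` from below as well.
-/

open Real Set

theorem le_of_hasDerivAt_neg_at_level {f f' : ℝ → ℝ} {a c : ℝ}
    (hf : ∀ x ∈ Ici a, HasDerivAt f (f' x) x) (ha : f a ≤ c)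
    (hlevel : ∀ x ∈ Ici a, f x = c → f' x < 0) : ∀ x ∈ Ici a, f x ≤ c := by
  intro x hx
  have hsub : Icc a x ⊆ Ici a := Icc_subset_Ici_self
  exact image_le_of_deriv_right_lt_deriv_boundary
    (fun y hy => (hf y (hsub hy)).continuousAt.continuousWithinAt)
    (fun y hy => (hf y (hsub (Ico_subset_Icc_self hy))).hasDerivWithinAt)
    (B := fun _ => c) ha (fun _ => hasDerivAt_const _ c)
    (fun y hy hy' => hlevel y (hsub (Ico_subset_Icc_self hy)) hy') (right_mem_Icc.2 hx)

theorem bddAbove_of_hasDerivAt_mul_periodic {ρ Q φ : ℝ → ℝ} {a T p : ℝ}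
    (hρpos : ∀ x ∈ Ici a, 0 < ρ x) (hQ : Function.Periodic Q T) (hT : 0 < T) (hp : Q p < 0)
    (hφ : ∀ x ∈ Ici a, HasDerivAt φ (ρ x * Q (φ x)) x) :
    ∃ M, ∀ x ∈ Ici a, φ x ≤ M := by
  obtain ⟨n, hn⟩ := exists_nat_ge ((φ a - p) / T)
  refine ⟨p + n * T, le_of_hasDerivAt_neg_at_level hφ ?_ fun x hx hx' => ?_⟩
  · linarith [(div_le_iff₀ hT).1 hn]
  · rw [hx', hQ.nat_mul n p]
    exact mul_neg_of_pos_of_neg (hρpos x hx) hp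

theorem exists_quadratic_neg {A B : ℝ} (hAB : 4 * A * B < 1) :
    ∃ t : ℝ, A * t ^ 2 + t + B < 0 := by
  rcases lt_trichotomy B 0 with hB | rfl | hB
  · exact ⟨0, by simpa using hB⟩
  · refine ⟨-1 / (|A| + 1), ?_⟩
    have hA : 0 < |A| + 1 := by positivity
    have hkey : A * (-1 / (|A| + 1)) ^ 2 + -1 / (|A| + 1) + 0
        = (A - (|A| + 1)) / (|A| + 1) ^ 2 := by
      field_simp
      ring
    rw [hkey]
    exact div_neg_of_neg_of_pos (by linarith [le_abs_self A]) (by positivity)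
  · exact ⟨-2 * B, by nlinarith⟩

noncomputable def pruferRhs (A B θ : ℝ) : ℝ :=
  A * sin θ ^ 2 + cos θ * sin θ + B * cos θ ^ 2

theorem pruferRhs_periodic (A B : ℝ) : Function.Periodic (pruferRhs A B) π := by
  intro θ
  simp only [pruferRhs, sin_add_pi, cos_add_pi]
  ring

theorem pruferRhs_arctan (A B t : ℝ) :
    pruferRhs A B (arctan t) = cos (arctan t) ^ 2 * (A * t ^ 2 + t + B) := by
  have hsin : sin (arctan t) = t * cos (arctan t) := by
    have htan := tan_arctan t
    rwa [tan_eq_sin_div_cos, div_eq_iff (cos_arctan_pos t).ne'] at htan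
  rw [pruferRhs, hsin]
  ring

theorem exists_pruferRhs_neg {A B : ℝ} (hAB : 4 * A * B < 1) : ∃ p, pruferRhs A B p < 0 := by
  obtain ⟨t, ht⟩ := exists_quadratic_neg hAB
  exact ⟨arctan t, pruferRhs_arctan A B t ▸ mul_neg_of_pos_of_neg (by positivity [cos_arctan_pos t]) ht⟩

theorem pruferRhs_neg_neg (A B θ : ℝ) : pruferRhs (-A) (-B) (-θ) = -pruferRhs A B θ := by
  simp only [pruferRhs, sin_neg, cos_neg]
  ring

theorem bddAbove_of_prufer {a A B : ℝ} {ρ φ : ℝ → ℝ}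
    (hρpos : ∀ x ∈ Ici a, 0 < ρ x) (hAB : 4 * A * B < 1)
    (hφ : ∀ x ∈ Ici a, HasDerivAt φ (ρ x * pruferRhs A B (φ x)) x) :
    ∃ M, ∀ x ∈ Ici a, φ x ≤ M :=
  let ⟨_, hp⟩ := exists_pruferRhs_neg hAB
  bddAbove_of_hasDerivAt_mul_periodic hρpos (pruferRhs_periodic A B) pi_pos hp hφ

theorem prufer_bounded_general (a : ℝ) (ρ : ℝ → ℝ) (A B : ℝ)
    (hρpos : ∀ x ∈ Ici a, 0 < ρ x)
    (hAB : 4 * A * B < 1)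
    (φ : ℝ → ℝ)
    (hφ : ∀ x ∈ Ici a, HasDerivAt φ
      (ρ x * (A * sin (φ x) ^ 2 + cos (φ x) * sin (φ x) + B * cos (φ x) ^ 2)) x) :
    ∃ M : ℝ, ∀ x ∈ Ici a, |φ x| ≤ M := by
  obtain ⟨M₁, hM₁⟩ := bddAbove_of_prufer hρpos hAB hφ
  have hAB' : 4 * -A * -B < 1 := by linarith
  have hφ' : ∀ x ∈ Ici a, HasDerivAt (-φ) (ρ x * pruferRhs (-A) (-B) ((-φ) x)) x := by
    intro x hx
    rw [Pi.neg_apply, pruferRhs_neg_neg, mul_neg]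
    exact (hφ x hx).neg
  obtain ⟨M₂, hM₂⟩ := bddAbove_of_prufer hρpos hAB' hφ'
  refine ⟨max M₁ M₂, fun x hx => abs_le.2 ⟨?_, ?_⟩⟩
  · linarith [neg_le.1 (hM₂ x hx), le_max_right M₁ M₂]
  · linarith [hM₁ x hx, le_max_left M₁ M₂]

/-- If `ρ > 0` is continuous and not integrable at `∞`, `4AB < 1`, and `φ` solves
`φ' = ρ(A sin²φ + cosφ sinφ + B cos²φ)`, then `φ` is bounded. -/
theorem prufer_bounded (a : ℝ) (ρ : ℝ → ℝ) (A B : ℝ)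
    (hρc : ContinuousOn ρ (Ici a)) (hρpos : ∀ x ∈ Ici a, 0 < ρ x)
    (hρnonint : ¬ MeasureTheory.IntegrableOn ρ (Ici a))
    (hAB : 4 * A * B < 1)
    (φ : ℝ → ℝ)
    (hφ : ∀ x ∈ Ici a, HasDerivAt φ
      (ρ x * (A * sin (φ x) ^ 2 + cos (φ x) * sin (φ x) + B * cos (φ x) ^ 2)) x) :
    ∃ M : ℝ, ∀ x ∈ Ici a, |φ x| ≤ M :=
  prufer_bounded_general a ρ A B hρpos hAB φ hφ
end

section
/- Suppose ρ : [a,∞) → (0,∞) is continuous, not integrable at ∞, and φ solves φ'(x) = ρ(x)(A sin²φ(x) + cos φ(x) sin φ(x) + B cos²φ(x)) with 4AB > 1 and A > 0. Then φ(x) → ∞ and moreover φ(x) / ∫_a^x ρ(t)dt → (1/2)√(4AB − 1) as x → ∞. -/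
open Real Set

/-!
Put `F(θ) = A sin²θ + cos θ sin θ + B cos²θ`, a positive definite quadratic form in
`(sin θ, cos θ)` because `4AB > 1`, and `D = √(4AB - 1) / 2`. The equation separates as
`dφ / F(φ) = ρ dx`. The function `G = pruferPhase A B` satisfies `G' = D / F` and stays within
`π / 2` of the identity, so `D ∫_a^x ρ = G (φ x) - G (φ a) = φ x + O(1)`. Since `∫_a^x ρ → ∞`,
this gives `φ x / ∫_a^x ρ → D`.
-/

open Filter Topology Asymptotics MeasureTheory

theorem tendsto_intervalIntegral_atTop_of_not_integrableOn_Ici {ρ : ℝ → ℝ} {a : ℝ}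
    (hρc : ContinuousOn ρ (Ici a)) (hρ : ∀ x ∈ Ici a, 0 ≤ ρ x)
    (hρi : ¬ IntegrableOn ρ (Ici a)) :
    Tendsto (fun x => ∫ t in a..x, ρ t) atTop atTop := by
  have hmono : MonotoneOn (fun x => ∫ t in a..x, ρ t) (Ici a) := fun x hx y _ hxy =>
    intervalIntegral.integral_mono_interval le_rfl hx hxy
      (ae_restrict_of_forall_mem measurableSet_Ioc fun t ht => hρ t ht.1.le)
      ((hρc.mono Icc_subset_Ici_self).intervalIntegrable_of_Icc (hx.trans hxy))
  rw [tendsto_atTop_atTop]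
  by_contra! hbdd
  obtain ⟨M, hM⟩ := hbdd
  refine hρi (Iff.mpr integrableOn_Ici_iff_integrableOn_Ioi
    (integrableOn_Ioi_of_intervalIntegral_norm_bounded M a
      (fun i => (hρc.mono Icc_subset_Ici_self).integrableOn_Icc.mono_set Ioc_subset_Icc_self)
      tendsto_id ?_))
  filter_upwards [eventually_ge_atTop a] with i hi
  obtain ⟨j, hij, hj⟩ := hM i
  calc ∫ t in a..i, ‖ρ t‖ = ∫ t in a..i, ρ t :=
        intervalIntegral.integral_congr fun t ht =>
          Real.norm_of_nonneg (hρ t (uIcc_of_le hi ▸ ht).1)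
    _ ≤ ∫ t in a..j, ρ t := hmono hi (hi.trans hij) hij
    _ ≤ M := hj.le

theorem mul_intervalIntegral_eq_sub_of_hasDerivAt_comp {F G φ ρ : ℝ → ℝ} {c a b : ℝ}
    (hG : ∀ θ, HasDerivAt G (c / F θ) θ) (hF : ∀ t ∈ uIcc a b, F (φ t) ≠ 0)
    (hφ : ∀ t ∈ uIcc a b, HasDerivAt φ (ρ t * F (φ t)) t)
    (hρ : IntervalIntegrable ρ volume a b) :
    c * ∫ t in a..b, ρ t = G (φ b) - G (φ a) := by
  rw [← intervalIntegral.integral_const_mul]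
  refine intervalIntegral.integral_eq_sub_of_hasDerivAt (f := G ∘ φ) (fun t ht => ?_)
    (hρ.const_mul c)
  refine ((hG (φ t)).comp t (hφ t ht)).congr_deriv ?_
  field_simp [hF t ht]

theorem tendsto_div_of_isBigO_sub_mul {α : Type*} {l : Filter α} {f g : α → ℝ} {c : ℝ}
    (hg : Tendsto g l atTop) (h : (fun x => f x - c * g x) =O[l] fun _ => (1 : ℝ)) :
    Tendsto (fun x => f x / g x) l (𝓝 c) := by
  have hsmall : Tendsto (fun x => (f x - c * g x) / g x) l (𝓝 0) := by
    refine (h.mul (isBigO_refl (fun x => (g x)⁻¹) l)).trans_tendsto ?_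
    simp only [one_mul]
    exact tendsto_inv_atTop_zero.comp hg
  refine (by simpa using hsmall.const_add c : Tendsto _ l (𝓝 c)).congr' ?_
  filter_upwards [hg.eventually_gt_atTop 0] with x hx
  field_simp
  ring

noncomputable section

def trigQuadForm (A B θ : ℝ) : ℝ := A * sin θ ^ 2 + cos θ * sin θ + B * cos θ ^ 2

def pruferRate (A B : ℝ) : ℝ := √(4 * A * B - 1) / 2

/-- With `p = (A + B) / 2`, `D = pruferRate A B` and `r`, `u` the two trigonometric
polynomials below, `trigQuadForm A B = p + r`, while `(r, u)` runs around the circle of radius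
`√(p² - D²)` with angular velocity `-2`. Hence `arctan (u / (p + D + r))` has derivative
`D / (p + r) - 1`, and its denominator never vanishes (unlike that of the textbook antiderivative
of `1 / F` through `tan θ`). -/
def pruferPhase (A B θ : ℝ) : ℝ :=
  θ + arctan ((cos (2 * θ) / 2 - (B - A) / 2 * sin (2 * θ)) /
    ((A + B) / 2 + pruferRate A B + (sin (2 * θ) / 2 + (B - A) / 2 * cos (2 * θ))))

end

section

variable {A B : ℝ}

theorem trigQuadForm_eq (θ : ℝ) :
    trigQuadForm A B θ = (A + B) / 2 + (sin (2 * θ) / 2 + (B - A) / 2 * cos (2 * θ)) := by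
  rw [trigQuadForm, sin_two_mul, cos_two_mul]
  linear_combination A * sin_sq_add_cos_sq θ

theorem trigQuadForm_pos (hA : 0 < A) (hAB : 1 < 4 * A * B) (θ : ℝ) :
    0 < trigQuadForm A B θ := by
  have hB : 0 < B := by nlinarith
  have hA' : 4 * A * trigQuadForm A B θ =
      (2 * A * sin θ + cos θ) ^ 2 + (4 * A * B - 1) * cos θ ^ 2 := by
    rw [trigQuadForm]; ring
  have hB' : 4 * B * trigQuadForm A B θ =
      (2 * B * cos θ + sin θ) ^ 2 + (4 * A * B - 1) * sin θ ^ 2 := by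
    rw [trigQuadForm]; ring
  nlinarith [sin_sq_add_cos_sq θ, sq_nonneg (2 * A * sin θ + cos θ),
    sq_nonneg (2 * B * cos θ + sin θ)]

theorem pruferRate_pos (hAB : 1 < 4 * A * B) : 0 < pruferRate A B :=
  div_pos (sqrt_pos.mpr (by linarith)) two_pos

theorem pruferRate_sq (hAB : 1 ≤ 4 * A * B) : pruferRate A B ^ 2 = A * B - 1 / 4 := by
  rw [pruferRate, div_pow, sq_sqrt (by linarith)]
  ring

theorem abs_pruferPhase_sub_le (θ : ℝ) : |pruferPhase A B θ - θ| ≤ π / 2 := by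
  rw [pruferPhase, add_sub_cancel_left, abs_le]
  exact ⟨(neg_pi_div_two_lt_arctan _).le, (arctan_lt_pi_div_two _).le⟩

theorem hasDerivAt_pruferPhase (hA : 0 < A) (hAB : 1 < 4 * A * B) (θ : ℝ) :
    HasDerivAt (pruferPhase A B) (pruferRate A B / trigQuadForm A B θ) θ := by
  set D := pruferRate A B
  set p := (A + B) / 2
  set k := (B - A) / 2
  set u := fun θ : ℝ => cos (2 * θ) / 2 - k * sin (2 * θ)
  set r := fun θ : ℝ => sin (2 * θ) / 2 + k * cos (2 * θ)
  have h2 : HasDerivAt (fun θ : ℝ => 2 * θ) 2 θ := by simpa using (hasDerivAt_id θ).const_mul 2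
  have hu : HasDerivAt u (-2 * r θ) θ := by
    have := (((hasDerivAt_cos _).comp θ h2).div_const 2).sub
      (((hasDerivAt_sin _).comp θ h2).const_mul k)
    exact this.congr_deriv (by simp only [r]; ring)
  have hr : HasDerivAt r (2 * u θ) θ := by
    have := (((hasDerivAt_sin _).comp θ h2).div_const 2).add
      (((hasDerivAt_cos _).comp θ h2).const_mul k)
    exact this.congr_deriv (by simp only [u]; ring)
  have hF : trigQuadForm A B θ = p + r θ := trigQuadForm_eq θ
  have hFpos : 0 < p + r θ := hF ▸ trigQuadForm_pos hA hAB θ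
  have hD : 0 < D := pruferRate_pos hAB
  have hv : 0 < p + D + r θ := by linarith
  have hcircle : u θ ^ 2 + r θ ^ 2 = p ^ 2 - D ^ 2 := by
    rw [pruferRate_sq hAB.le]
    simp only [u, r, p, k]
    linear_combination (1 / 4 + (B - A) ^ 2 / 4) * sin_sq_add_cos_sq (2 * θ)
  have harg := hu.div ((hasDerivAt_const θ (p + D)).add hr) hv.ne'
  refine ((hasDerivAt_id θ).add ((hasDerivAt_arctan _).comp θ harg)).congr_deriv ?_
  rw [hF]
  clear_value D p k u r
  simp only [Pi.add_apply, Pi.div_apply, zero_add]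
  field_simp
  linear_combination (-(p + r θ) - D) * hcircle

end

/-- If `ρ > 0` is continuous with `∫_a^∞ ρ = ∞`, `A > 0`, `4AB > 1`, and `φ` solves
`φ' = ρ(A sin²φ + cosφ sinφ + B cos²φ)`, then `φ(x)/∫_a^x ρ → √(4AB−1)/2`. -/
theorem prufer_unbounded_asymptotics (a : ℝ) (ρ : ℝ → ℝ) (A B : ℝ)
    (hρc : ContinuousOn ρ (Ici a)) (hρpos : ∀ x ∈ Ici a, 0 < ρ x)
    (hρnonint : ¬ MeasureTheory.IntegrableOn ρ (Ici a))
    (hA : 0 < A) (hAB : 1 < 4 * A * B)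
    (φ : ℝ → ℝ)
    (hφ : ∀ x ∈ Ici a, HasDerivAt φ
      (ρ x * (A * sin (φ x) ^ 2 + cos (φ x) * sin (φ x) + B * cos (φ x) ^ 2)) x) :
    Filter.Tendsto (fun x => φ x / ∫ t in a..x, ρ t) Filter.atTop
      (nhds (Real.sqrt (4 * A * B - 1) / 2)) := by
  set G := pruferPhase A B
  have hR : Tendsto (fun x => ∫ t in a..x, ρ t) atTop atTop :=
    tendsto_intervalIntegral_atTop_of_not_integrableOn_Ici hρc (fun x hx => (hρpos x hx).le)
      hρnonint
  have hseparation : ∀ x ≥ a, pruferRate A B * ∫ t in a..x, ρ t = G (φ x) - G (φ a) :=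
    fun x hx => mul_intervalIntegral_eq_sub_of_hasDerivAt_comp (hasDerivAt_pruferPhase hA hAB)
      (fun t _ => (trigQuadForm_pos hA hAB _).ne')
      (fun t ht => hφ t (uIcc_of_le hx ▸ ht).1)
      ((hρc.mono Icc_subset_Ici_self).intervalIntegrable_of_Icc hx)
  refine tendsto_div_of_isBigO_sub_mul (c := pruferRate A B) hR
    (IsBigO.of_bound (π / 2 + |G (φ a)|) ?_)
  filter_upwards [eventually_ge_atTop a] with x hx
  rw [hseparation x hx, norm_one, mul_one, norm_eq_abs, ← sub_add]
  calc |φ x - G (φ x) + G (φ a)| ≤ |G (φ x) - φ x| + |G (φ a)| := by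
        rw [abs_sub_comm]; exact abs_add_le _ _
    _ ≤ π / 2 + |G (φ a)| := by grw [abs_pruferPhase_sub_le]
end

section
/- Suppose αⱼ are real numbers with ε_j^σ ≤ |2α_j − ⟨ω, m_j⟩| ≤ 2ε_j^σ whenever m_j ≠ 0, and |A_k| ≤ 32|α_k| N_k^τ when |α_k| ≥ (1/4)N_k^{-τ}. If m_l ≠ 0 and |A_{j+1} − (1 − ⟨ω,m_j⟩/(2α_j))A_j| ≤ ε_j^{2/3} and m_j = 0 for l < j < k, then |A_k| ≤ ∑_{j=l}^{k-1} ε_j^{2/3} + 2ε_l^σ |A_l/(2α_l)| ≤ 34 N_l^τ ε_l^σ, provided ε_l^{2/3} ≤ ε_l^σ N_l^τ and |A_l| ≤ 32|α_l|N_l^τ. -/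
open Matrix Finset

attribute [local instance] Matrix.frobeniusNormedAddCommGroup

attribute [local instance] Matrix.frobeniusNormedSpace

/-! Only the resonant step `l` can enlarge `A`: its coefficient
`1 - ⟨ω, m_l⟩/(2α_l) = (2α_l - ⟨ω, m_l⟩)/(2α_l)` has size at most `2ε_l^σ/(2|α_l|)`, while for
`l < j < k` the coefficient is `1`, so each later step moves `A` by at most `ε_j^{2/3}`.
Summing, and using `|A_l|/(2|α_l|) ≤ 16 N_l^τ` together with `∑ ε_j^{2/3} ≤ 2ε_l^{2/3}`, gives
the bound `34 N_l^τ ε_l^σ`. -/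

section

variable {E : Type*} [SeminormedAddCommGroup E]

theorem norm_one_sub_div_smul_le {𝕜 : Type*} [NormedField 𝕜] [NormedSpace 𝕜 E]
    {a c : 𝕜} {r : ℝ} (ha : a ≠ 0) (h : ‖a - c‖ ≤ r) (v : E) :
    ‖(1 - c / a) • v‖ ≤ r * (‖v‖ / ‖a‖) := by
  rw [one_sub_div ha, norm_smul, norm_div, div_mul_eq_mul_div, mul_div_assoc]
  gcongr

theorem norm_le_sum_add_of_norm_sub_smul_le {R : Type*} [Monoid R] [MulAction R E]
    {x : ℕ → E} {c : ℕ → R} {δ : ℕ → ℝ} {a b : ℕ} (hab : a < b)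
    (hc : ∀ j, a < j → j < b → c j = 1)
    (hstep : ∀ j, a ≤ j → j < b → ‖x (j + 1) - c j • x j‖ ≤ δ j) :
    ‖x b‖ ≤ ∑ j ∈ Ico a b, δ j + ‖c a • x a‖ := by
  have hfirst : ‖x (a + 1)‖ ≤ ‖c a • x a‖ + δ a :=
    (norm_le_norm_add_norm_sub' _ _).trans (add_le_add_right (hstep a le_rfl hab) _)
  have hrest : dist (x (a + 1)) (x b) ≤ ∑ j ∈ Ico (a + 1) b, δ j := by
    refine dist_le_Ico_sum_of_dist_le hab fun {j} haj hjb => ?_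
    have := hstep j (Nat.le_of_succ_le haj) hjb
    rwa [hc j haj hjb, one_smul, ← dist_eq_norm, dist_comm] at this
  have hlast : ‖x b‖ ≤ ‖x (a + 1)‖ + dist (x (a + 1)) (x b) := by
    rw [dist_comm, dist_eq_norm]
    exact norm_le_norm_add_norm_sub' _ _
  rw [sum_eq_sum_Ico_succ_bot hab]
  linarith

end

theorem Ak_norm_estimate_general (d : ℕ) (σ τ : ℝ) (ε N : ℕ → ℝ) (α : ℕ → ℝ) (m : ℕ → Fin d → ℤ)
    (ω : Fin d → ℝ) (A : ℕ → Matrix (Fin 2) (Fin 2) ℝ)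
    (hα : ∀ j, α j ≠ 0)
    (l k : ℕ) (hlk : l < k)
    (hεsum : ∑ j ∈ Ico l k, ε j ^ ((2 : ℝ) / 3) ≤ 2 * ε l ^ ((2 : ℝ) / 3))
    (hm0 : ∀ j, l < j → j < k → m j = 0)
    (hstep : ∀ j, l ≤ j → j < k →
      ‖A (j + 1) - (1 - (∑ i, ω i * (m j i : ℝ)) / (2 * α j)) • A j‖
        ≤ ε j ^ ((2 : ℝ) / 3))
    (hres₂ : |2 * α l - ∑ i, ω i * (m l i : ℝ)| ≤ 2 * ε l ^ σ)
    (hAl : ‖A l‖ ≤ 32 * |α l| * N l ^ τ)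
    (hεNτ : ε l ^ ((2 : ℝ) / 3) ≤ ε l ^ σ * N l ^ τ) :
    ‖A k‖ ≤ ∑ j ∈ Ico l k, ε j ^ ((2 : ℝ) / 3)
        + 2 * ε l ^ σ * (‖A l‖ / (2 * |α l|)) ∧
    ‖A k‖ ≤ 34 * N l ^ τ * ε l ^ σ := by
  have hresonant : ‖(1 - (∑ i, ω i * (m l i : ℝ)) / (2 * α l)) • A l‖
      ≤ 2 * ε l ^ σ * (‖A l‖ / (2 * |α l|)) := by
    simpa only [Real.norm_eq_abs, abs_mul, abs_two] using
      norm_one_sub_div_smul_le (mul_ne_zero two_ne_zero (hα l)) hres₂ (A l)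
  have hsum : ‖A k‖ ≤ ∑ j ∈ Ico l k, ε j ^ ((2 : ℝ) / 3)
      + 2 * ε l ^ σ * (‖A l‖ / (2 * |α l|)) := by
    refine (norm_le_sum_add_of_norm_sub_smul_le hlk (fun j hlj hjk => ?_) hstep).trans
      (add_le_add_right hresonant _)
    simp [hm0 j hlj hjk]
  have hεσ : 0 ≤ ε l ^ σ := by linarith [abs_nonneg (2 * α l - ∑ i, ω i * (m l i : ℝ))]
  have hAl' : ‖A l‖ / (2 * |α l|) ≤ 16 * N l ^ τ := by
    rw [div_le_iff₀ (by positivity [hα l])]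
    linarith
  refine ⟨hsum, ?_⟩
  calc ‖A k‖ ≤ 2 * ε l ^ ((2 : ℝ) / 3) + 2 * ε l ^ σ * (16 * N l ^ τ) := by
        linarith [mul_le_mul_of_nonneg_left hAl' (by positivity : 0 ≤ 2 * ε l ^ σ)]
    _ ≤ 34 * N l ^ τ * ε l ^ σ := by linarith

/-- Estimate on `‖A_k‖` after the last resonance: if `m_l ≠ 0`, `m_j = 0` for
`l < j < k`, with the KAM step estimates, then
`‖A_k‖ ≤ ∑_{j=l}^{k-1} ε_j^{2/3} + 2 ε_l^σ ‖A_l‖/(2|α_l|) ≤ 34 N_l^τ ε_l^σ`. -/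
theorem Ak_norm_estimate (d : ℕ) (σ τ : ℝ) (hσ : 0 < σ) (hσ' : σ ≤ 2 / 3)
    (hτ : 0 < τ) (ε N : ℕ → ℝ) (α : ℕ → ℝ) (m : ℕ → Fin d → ℤ)
    (ω : Fin d → ℝ) (A : ℕ → Matrix (Fin 2) (Fin 2) ℝ)
    (hε : ∀ j, 0 < ε j ∧ ε j < 1) (hεdec : ∀ j, ε (j + 1) ≤ ε j)
    (hN : ∀ j, 1 ≤ N j) (hα : ∀ j, α j ≠ 0)
    (l k : ℕ) (hlk : l < k)
    (hεsum : ∑ j ∈ Ico l k, ε j ^ ((2 : ℝ) / 3) ≤ 2 * ε l ^ ((2 : ℝ) / 3))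
    (hml : m l ≠ 0) (hm0 : ∀ j, l < j → j < k → m j = 0)
    (hstep : ∀ j, l ≤ j → j < k →
      ‖A (j + 1) - (1 - (∑ i, ω i * (m j i : ℝ)) / (2 * α j)) • A j‖
        ≤ ε j ^ ((2 : ℝ) / 3))
    (hres₁ : ε l ^ σ ≤ |2 * α l - ∑ i, ω i * (m l i : ℝ)|)
    (hres₂ : |2 * α l - ∑ i, ω i * (m l i : ℝ)| ≤ 2 * ε l ^ σ)
    (hAl : ‖A l‖ ≤ 32 * |α l| * N l ^ τ)
    (hεNτ : ε l ^ ((2 : ℝ) / 3) ≤ ε l ^ σ * N l ^ τ) :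
    ‖A k‖ ≤ ∑ j ∈ Ico l k, ε j ^ ((2 : ℝ) / 3)
        + 2 * ε l ^ σ * (‖A l‖ / (2 * |α l|)) ∧
    ‖A k‖ ≤ 34 * N l ^ τ * ε l ^ σ :=
  Ak_norm_estimate_general d σ τ ε N α m ω A hα l k hlk hεsum hm0 hstep hres₂ hAl hεNτ
end

section
/- Let φ : [a,∞) → ℝ be C¹ with φ'(x) = (1/x)(sin²φ + cos φ sin φ + μK cos²φ) + O(1/x²) where μK > 1/4 (constants μK real). Then φ(x) = ((1/2)√(4μK − 1) + o(1)) log x as x → ∞. -/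
/-!
Let `F = pruferForm c`, positive and `π`-periodic since `c > 1/4`, and let
`G θ = ∫₀^θ 1/F`. The equation says `(G ∘ φ)' = 1/x + O(1/x²)`, so `G (φ x) = log x + O(1)`.
By periodicity `G θ = θ G(π)/π + O(1)`. Completing the square,
`F θ = (sin θ + cos θ/2)² + (c - 1/4) cos² θ`, gives the antiderivative
`arctan ((tan θ + 1/2)/ω)/ω` of `1/F` with `ω = √(4c-1)/2`, so `G π = π/ω`.
Hence `φ x = ω log x + O(1)`.
-/

open Real Filter Asymptotics Set

theorem Function.Periodic.isBigO_intervalIntegral_sub {g : ℝ → ℝ} {T : ℝ}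
    (hg : Function.Periodic g T) (hT : 0 < T)
    (h_int : IntervalIntegrable g MeasureTheory.volume 0 T) :
    (fun t => (∫ x in 0..t, g x) - t / T * ∫ x in 0..T, g x) =O[⊤] fun _ => (1 : ℝ) := by
  set S := (fun t => ∫ x in 0..t, g x) '' Icc 0 T
  set I := ∫ x in 0..T, g x
  refine IsBigO.of_bound (|sInf S| + |sSup S| + |I|) (Eventually.of_forall fun t => ?_)
  have hfract : t / T * I = ⌊t / T⌋ • I + Int.fract (t / T) * I := by
    rw [zsmul_eq_mul, ← add_mul, Int.floor_add_fract]
  have hfract_le : |Int.fract (t / T) * I| ≤ |I| := by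
    rw [abs_mul, abs_of_nonneg (Int.fract_nonneg _)]
    exact mul_le_of_le_one_left (abs_nonneg I) (Int.fract_lt_one _).le
  rw [norm_one, mul_one, Real.norm_eq_abs, hfract, ← sub_sub]
  refine (abs_sub _ _).trans (add_le_add (abs_le.mpr ⟨?_, ?_⟩) hfract_le)
  · linarith [hg.sInf_add_zsmul_le_integral_of_pos h_int hT t, neg_abs_le (sInf S),
      abs_nonneg (sSup S)]
  · linarith [hg.integral_le_sSup_add_zsmul_of_pos h_int hT t, le_abs_self (sSup S),
      abs_nonneg (sInf S)]

theorem isBigO_sub_log_of_abs_deriv_sub_inv_le {f f' : ℝ → ℝ} {b K : ℝ} (hb : 0 < b)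
    (hf : ∀ x ∈ Ici b, HasDerivAt f (f' x) x)
    (hf' : ∀ x ∈ Ici b, |f' x - x⁻¹| ≤ K / x ^ 2) :
    (fun x => f x - log x) =O[atTop] fun _ => (1 : ℝ) := by
  have hK : 0 ≤ K := by
    have := (abs_nonneg _).trans (hf' b self_mem_Ici)
    exact (div_nonneg_iff.mp this).elim (·.1) fun h => by nlinarith [h.2, pow_pos hb 2]
  set u := fun x => f x - log x
  have hu : ∀ x ∈ Ici b, HasDerivAt (fun y => u y - u b) (f' x - x⁻¹) x := fun x hx =>
    ((hf x hx).sub (hasDerivAt_log (hb.trans_le hx).ne')).sub_const _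
  have hB : ∀ x ∈ Ici b, HasDerivAt (fun y => K / b - K / y) (K / x ^ 2) x := fun x hx => by
    simpa [div_eq_mul_inv] using
      ((hasDerivAt_inv (hb.trans_le hx).ne').const_mul K).const_sub (K / b)
  have hu_sub : ∀ x ∈ Ici b, ‖u x - u b‖ ≤ K / b - K / x := fun x hx =>
    image_norm_le_of_norm_deriv_right_le_deriv_boundary' (f := fun y => u y - u b)
      (fun y hy => (hu y hy.1).continuousAt.continuousWithinAt)
      (fun y hy => (hu y hy.1).hasDerivWithinAt) (by simp)
      (fun y hy => (hB y hy.1).continuousAt.continuousWithinAt)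
      (fun y hy => (hB y hy.1).hasDerivWithinAt) (fun y hy => hf' y hy.1) ⟨hx, le_rfl⟩
  refine IsBigO.of_bound (|u b| + K / b) ?_
  filter_upwards [eventually_ge_atTop b] with x hx
  have hKx : 0 ≤ K / x := div_nonneg hK (hb.trans_le hx).le
  rw [norm_one, mul_one]
  calc ‖u x‖ ≤ ‖u x - u b‖ + ‖u b‖ := norm_le_norm_sub_add _ _
    _ ≤ K / b - K / x + |u b| := add_le_add (hu_sub x hx) le_rfl
    _ ≤ |u b| + K / b := by linarith

theorem tendsto_div_log_of_isBigO_sub {f : ℝ → ℝ} {k : ℝ}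
    (hf : (fun x => f x - k * log x) =O[atTop] fun _ => (1 : ℝ)) :
    Tendsto (fun x => f x / log x) atTop (nhds k) := by
  have hdev := (hf.trans_isLittleO isLittleO_const_log_atTop).tendsto_div_nhds_zero
  rw [← zero_add k]
  refine (hdev.add_const k).congr' ?_
  filter_upwards [eventually_gt_atTop 1] with x hx
  have := (log_pos hx).ne'
  field_simp
  ring

theorem abs_inv_mul_sub_inv_le {F y x m E : ℝ} (hm : 0 < m) (hF : m ≤ F)
    (h : |y - 1 / x * F| ≤ E) : |F⁻¹ * y - x⁻¹| ≤ E / m := by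
  have hF0 : 0 < F := hm.trans_le hF
  have hrw : F⁻¹ * y - x⁻¹ = (y - 1 / x * F) / F := by field_simp
  calc |F⁻¹ * y - x⁻¹| = |y - 1 / x * F| / F := by rw [hrw, abs_div, abs_of_pos hF0]
    _ ≤ E / F := by gcongr
    _ ≤ E / m := div_le_div_of_nonneg_left ((abs_nonneg _).trans h) hm hF

noncomputable def pruferForm (c θ : ℝ) : ℝ := sin θ ^ 2 + cos θ * sin θ + c * cos θ ^ 2

section PruferForm

variable {c : ℝ}

theorem pruferForm_periodic (c : ℝ) : Function.Periodic (pruferForm c) π := fun θ => by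
  simp [pruferForm, sin_add_pi, cos_add_pi]

theorem pruferForm_eq_sq_add (c θ : ℝ) :
    pruferForm c θ = (sin θ + cos θ / 2) ^ 2 + (c - 1 / 4) * cos θ ^ 2 := by
  rw [pruferForm]; ring

/- `(4c - 1) / (4(c + 1))` is determinant over trace of the matrix `!![1, 1/2; 1/2, c]` of the
form, a lower bound for its smaller eigenvalue. -/
theorem div_le_pruferForm (hc : 1 / 4 < c) (θ : ℝ) :
    (4 * c - 1) / (4 * (c + 1)) ≤ pruferForm c θ := by
  rw [div_le_iff₀ (by linarith), pruferForm]
  nlinarith [sin_sq_add_cos_sq θ, sq_nonneg (5 * sin θ + 2 * (c + 1) * cos θ),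
    sq_nonneg ((4 * c - 1) * cos θ)]

theorem pruferForm_pos (hc : 1 / 4 < c) (θ : ℝ) : 0 < pruferForm c θ :=
  (div_pos (by linarith) (by linarith)).trans_le (div_le_pruferForm hc θ)

theorem continuous_inv_pruferForm (hc : 1 / 4 < c) : Continuous fun θ => (pruferForm c θ)⁻¹ :=
  (by unfold pruferForm; fun_prop : Continuous (pruferForm c)).inv₀
    fun θ => (pruferForm_pos hc θ).ne'

theorem hasDerivAt_arctan_tan_add_half_div (hc : 1 / 4 < c) {θ : ℝ} (hθ : cos θ ≠ 0) :
    HasDerivAt (fun t => arctan ((tan t + 1 / 2) / (√(4 * c - 1) / 2)) / (√(4 * c - 1) / 2))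
      (pruferForm c θ)⁻¹ θ := by
  set ω := √(4 * c - 1) / 2
  have hω : ω ≠ 0 := (div_pos (sqrt_pos.2 (by linarith)) two_pos).ne'
  have hω_sq : ω ^ 2 = c - 1 / 4 := by
    rw [div_pow, sq_sqrt (by linarith)]; ring
  refine ((((hasDerivAt_tan hθ).add_const (1 / 2)).div_const ω).arctan.div_const ω).congr_deriv ?_
  rw [pruferForm_eq_sq_add, ← hω_sq, tan_eq_sin_div_cos]
  field_simp
  ring

theorem integral_inv_pruferForm (hc : 1 / 4 < c) :
    ∫ θ in 0..π, (pruferForm c θ)⁻¹ = π / (√(4 * c - 1) / 2) := by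
  set ω := √(4 * c - 1) / 2
  have hω : 0 < ω := div_pos (sqrt_pos.2 (by linarith)) two_pos
  have h_shift :
      ∫ θ in 0..π, (pruferForm c θ)⁻¹ = ∫ θ in -(π / 2)..π / 2, (pruferForm c θ)⁻¹ := by
    have := ((pruferForm_periodic c).comp Inv.inv).intervalIntegral_add_eq 0 (-(π / 2))
    rwa [zero_add, show -(π / 2) + π = π / 2 by ring] at this
  rw [h_shift, intervalIntegral.integral_eq_sub_of_hasDerivAt_of_tendsto (by linarith [pi_pos])
    (fun θ hθ => hasDerivAt_arctan_tan_add_half_div hc (cos_pos_of_mem_Ioo hθ).ne')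
    ((continuous_inv_pruferForm hc).intervalIntegrable _ _)
    ((tendsto_arctan_atBot.mono_right nhdsWithin_le_nhds).comp
      ((tendsto_atBot_add_const_right _ _ tendsto_tan_neg_pi_div_two).atBot_div_const hω)
      |>.div_const ω)
    ((tendsto_arctan_atTop.mono_right nhdsWithin_le_nhds).comp
      ((tendsto_atTop_add_const_right _ _ tendsto_tan_pi_div_two).atTop_div_const hω)
      |>.div_const ω)]
  field_simp
  ring

end PruferForm

theorem prufer_log_asymptotics_general (a : ℝ) (ha : 1 < a) (c : ℝ) (hc : 1 / 4 < c)
    (φ : ℝ → ℝ) (hφdiff : ∀ x ∈ Set.Ici a, DifferentiableAt ℝ φ x)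
    (C : ℝ)
    (hφ : ∀ x ∈ Set.Ici a,
      |deriv φ x - (1 / x) * (sin (φ x) ^ 2 + cos (φ x) * sin (φ x)
        + c * cos (φ x) ^ 2)| ≤ C / x ^ 2) :
    Filter.Tendsto (fun x => φ x / Real.log x) Filter.atTop
      (nhds (Real.sqrt (4 * c - 1) / 2)) := by
  set ω := √(4 * c - 1) / 2
  have hω : ω ≠ 0 := (div_pos (sqrt_pos.2 (by linarith)) two_pos).ne'
  set m := (4 * c - 1) / (4 * (c + 1))
  set G := fun θ => ∫ t in 0..θ, (pruferForm c t)⁻¹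
  have hGφ_deriv : ∀ x ∈ Ici a,
      HasDerivAt (fun x => G (φ x)) ((pruferForm c (φ x))⁻¹ * deriv φ x) x := fun x hx =>
    ((continuous_inv_pruferForm hc).integral_hasStrictDerivAt 0 (φ x)).hasDerivAt.comp x
      (hφdiff x hx).hasDerivAt
  have hGφ_deriv_sub : ∀ x ∈ Ici a,
      |(pruferForm c (φ x))⁻¹ * deriv φ x - x⁻¹| ≤ C / m / x ^ 2 := fun x hx =>
    div_right_comm C (x ^ 2) m ▸ abs_inv_mul_sub_inv_le (div_pos (by linarith) (by linarith))
      (div_le_pruferForm hc _) (hφ x hx)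
  have hGφ_log : (fun x => G (φ x) - log x) =O[atTop] fun _ => (1 : ℝ) :=
    isBigO_sub_log_of_abs_deriv_sub_inv_le (by linarith) hGφ_deriv hGφ_deriv_sub
  have hGφ_lin : (fun x => G (φ x) - φ x / ω) =O[atTop] fun _ => (1 : ℝ) := by
    have hG_lin := ((pruferForm_periodic c).comp Inv.inv).isBigO_intervalIntegral_sub pi_pos
      ((continuous_inv_pruferForm hc).intervalIntegrable _ _)
    refine (hG_lin.comp_tendsto (tendsto_top (f := φ) (l := atTop))).congr_left fun x => ?_
    simp only [Function.comp_apply, integral_inv_pruferForm hc]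
    rw [div_mul_div_cancel₀ pi_ne_zero]
  refine tendsto_div_log_of_isBigO_sub
    (((hGφ_log.sub hGφ_lin).const_mul_left ω).congr_left fun x => ?_)
  field_simp
  ring

/-- If `φ' = (1/x)(sin²φ + cosφ sinφ + c cos²φ) + O(1/x²)` with `c > 1/4`, then
`φ(x) = ((1/2)√(4c−1) + o(1)) log x`, i.e. `φ(x)/log x → √(4c−1)/2`. -/
theorem prufer_log_asymptotics (a : ℝ) (ha : 1 < a) (c : ℝ) (hc : 1 / 4 < c)
    (φ : ℝ → ℝ) (hφdiff : ∀ x ∈ Set.Ici a, DifferentiableAt ℝ φ x)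
    (C : ℝ) (hC : 0 < C)
    (hφ : ∀ x ∈ Set.Ici a,
      |deriv φ x - (1 / x) * (sin (φ x) ^ 2 + cos (φ x) * sin (φ x)
        + c * cos (φ x) ^ 2)| ≤ C / x ^ 2) :
    Filter.Tendsto (fun x => φ x / Real.log x) Filter.atTop
      (nhds (Real.sqrt (4 * c - 1) / 2)) :=
  prufer_log_asymptotics_general a ha c hc φ hφdiff C hφ
end
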